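/- For a decentralisable refined global type G, the centralised refined configuration of G simulates the decentralised configuration of G: for every decentralised reduction there is a matching centralised reduction, and along the simulation the centralised global map is always a superset of the disjoint union of all local maps of the decentralised configuration. -/

import Mathlib

namespace RefinedMPST

abbrev Part := Nat
abbrev Var := Nat
abbrev Val := Int
abbrev Label := Nat

/-- A message: a label, a variable name and a value. -/
abbrev Msg := Label × Var × Val

inductive Dir where
  | send
  | recv
deriving DecidableEq

/-- An abstract refinement predicate: a set of free variables and an
evaluation function on maps, whose truth only depends on the free variables. -/
structure Refn where
  fv : Set Var
  eval : (Var → Option Val) → Prop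
  congr : ∀ M M' : Var → Option Val, (∀ x ∈ fv, M x = M' x) → (eval M ↔ eval M')

/-- An action `p † q ⟨m⟩ · r` with sender `p`, direction `†`, receiver `q`,
message `m` and refinement `r`.  Sender and receiver are required distinct. -/
structure Action where
  src : Part
  dir : Dir
  dst : Part
  msg : Msg
  ref : Refn

abbrev Trace := List Action

/-- Maps from variables to values. -/
abbrev Map := Var → Option Val

def updM (M : Map) (x : Var) (c : Val) : Map := Function.update M x (some c)
def removeM (M : Map) (x : Var) : Map := Function.update M x none
def MDom (M : Map) : Set Var := {x | M x ≠ none}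
def emptyM : Map := fun _ => none

/-- `Sat M r`, written `M ⊨ r`: the free variables of `r` are in the domain of
`M` and `r` evaluates to true under `M`. -/
def Sat (M : Map) (r : Refn) : Prop := r.fv ⊆ MDom M ∧ r.eval M

/-- A queue: one FIFO of messages per ordered pair of participants
(oldest element at the head). -/
abbrev Queue := Part → Part → List Msg

def emptyQ : Queue := fun _ _ => []
/-- Push `e` on the FIFO from `p` to `q` (at the tail, i.e. newest end). -/
def pushQ (w : Queue) (e : Msg) (p q : Part) : Queue :=
  fun p' q' => if p' = p ∧ q' = q then w p q ++ [e] else w p' q'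
/-- Pop the oldest element of the FIFO from `p` to `q`. -/
def popQ (w : Queue) (p q : Part) : Queue :=
  fun p' q' => if p' = p ∧ q' = q then (w p q).tail else w p' q'
/-- The oldest element of the FIFO from `p` to `q` (if any). -/
def nextQ (w : Queue) (p q : Part) : Option Msg := (w p q).head?

/-- A refined communicating finite state machine with states in `S`. -/
structure RCFSM (S : Type) where
  init : S
  trans : S → Action → S → Prop

/-- A refined communicating system: one RCFSM per participant. -/
abbrev RCS (S : Type) := Part → RCFSM S

/-- A refined configuration: local states, queue, and global map. -/
structure Config (S : Type) where
  st : Part → S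
  q : Queue
  m : Map

/-- The centralised refined global semantics (rules GRSnd and GRRec). -/
inductive Step {S : Type} (R : RCS S) : Config S → Action → Config S → Prop where
  | snd {C : Config S} {i j : Part} {l : Label} {x : Var} {c : Val} {r : Refn} {s' : S} :
      (R i).trans (C.st i) (Action.mk i Dir.send j (l, x, c) r) s' →
      Sat (updM C.m x c) r →
      Step R C (Action.mk i Dir.send j (l, x, c) r)
        (Config.mk (Function.update C.st i s') (pushQ C.q (l, x, c) i j) (updM C.m x c))
  | rcv {C : Config S} {j i : Part} {l : Label} {x : Var} {c : Val} {r : Refn} {s' : S} :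
      (R i).trans (C.st i) (Action.mk j Dir.recv i (l, x, c) r) s' →
      Sat (updM C.m x c) r →
      nextQ C.q j i = some (l, x, c) →
      Step R C (Action.mk j Dir.recv i (l, x, c) r)
        (Config.mk (Function.update C.st i s') (popQ C.q j i) (updM C.m x c))

/-- Sequences of reductions, recording the trace of actions. -/
inductive Steps {S : Type} (R : RCS S) : Config S → Trace → Config S → Prop where
  | refl (C : Config S) : Steps R C [] C
  | step {C C' C'' : Config S} {a : Action} {τ : Trace} :
      Step R C a C' → Steps R C' τ C'' → Steps R C (a :: τ) C''

/-- A configuration is initial when the queue and map are empty and each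
participant is in its initial local state. -/
def Initial {S : Type} (R : RCS S) (C : Config S) : Prop :=
  C.q = emptyQ ∧ C.m = emptyM ∧ ∀ p, C.st p = (R p).init

/-- A configuration is final when the queue is empty. -/
def Final {S : Type} (C : Config S) : Prop := C.q = emptyQ

/-- A configuration is reachable if it appears in a run from an initial
configuration. -/
def Reachable {S : Type} (R : RCS S) (C : Config S) : Prop :=
  ∃ C0 τ, Initial R C0 ∧ Steps R C0 τ C

/-- A decentralised configuration: each participant has a local map. -/
structure DConfig (S : Type) where
  st : Part → S
  lm : Part → Map
  q : Queue

/-- The decentralised global semantics (rules DSnd and DRec). -/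
inductive DStep {S : Type} (R : RCS S) : DConfig S → Action → DConfig S → Prop where
  | snd {D : DConfig S} {i j : Part} {l : Label} {x : Var} {c : Val} {r : Refn} {s' : S} :
      (R i).trans (D.st i) (Action.mk i Dir.send j (l, x, c) r) s' →
      Sat (updM (D.lm i) x c) r →
      DStep R D (Action.mk i Dir.send j (l, x, c) r)
        (DConfig.mk (Function.update D.st i s')
          (Function.update D.lm i (removeM (D.lm i) x))
          (pushQ D.q (l, x, c) i j))
  | rcv {D : DConfig S} {j i : Part} {l : Label} {x : Var} {c : Val} {r : Refn} {s' : S} :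
      (R i).trans (D.st i) (Action.mk j Dir.recv i (l, x, c) r) s' →
      Sat (updM (D.lm i) x c) r →
      nextQ D.q j i = some (l, x, c) →
      DStep R D (Action.mk j Dir.recv i (l, x, c) r)
        (DConfig.mk (Function.update D.st i s')
          (Function.update D.lm i (updM (D.lm i) x c))
          (popQ D.q j i))

inductive DSteps {S : Type} (R : RCS S) : DConfig S → Trace → DConfig S → Prop where
  | refl (D : DConfig S) : DSteps R D [] D
  | step {D D' D'' : DConfig S} {a : Action} {τ : Trace} :
      DStep R D a D' → DSteps R D' τ D'' → DSteps R D (a :: τ) D''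

def DInitial {S : Type} (R : RCS S) (D : DConfig S) : Prop :=
  D.q = emptyQ ∧ (∀ p, D.lm p = emptyM) ∧ ∀ p, D.st p = (R p).init

def DFinal {S : Type} (D : DConfig S) : Prop := D.q = emptyQ

def DReachable {S : Type} (R : RCS S) (D : DConfig S) : Prop :=
  ∃ D0 τ, DInitial R D0 ∧ DSteps R D0 τ D

/-- Condition (1) of decentralisable types: no variable is duplicated among
local maps and in-transit messages. -/
def NoDupVars {S : Type} (D : DConfig S) : Prop :=
  (∀ x i, x ∈ MDom (D.lm i) →
      (∀ p q, ∀ m ∈ D.q p q, m.2.1 ≠ x) ∧ (∀ j, x ∈ MDom (D.lm j) → j = i)) ∧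
  (∀ x p q n m, (D.q p q)[(n : Nat)]? = some m → m.2.1 = x →
      (∀ i, x ∉ MDom (D.lm i)) ∧
      (∀ p' q' n' m', (D.q p' q')[(n' : Nat)]? = some m' → m'.2.1 = x →
        p' = p ∧ q' = q ∧ n' = n))

/-- Condition (2): the free variables of the refinement of any enabled local
transition of participant `i` are in `i`'s (updated) local map. -/
def FVCond {S : Type} (R : RCS S) (D : DConfig S) : Prop :=
  ∀ i (s' : S) (a : Action), (R i).trans (D.st i) a s' →
    (a.dir = Dir.send → a.src = i →
      a.ref.fv ⊆ MDom (updM (D.lm i) a.msg.2.1 a.msg.2.2)) ∧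
    (a.dir = Dir.recv → a.dst = i →
      a.ref.fv ⊆ MDom (updM (D.lm i) a.msg.2.1 a.msg.2.2))

/-- The two conditions hold in every reachable decentralised configuration. -/
def Decentralisable {S : Type} (R : RCS S) : Prop :=
  ∀ D, DReachable R D → NoDupVars D ∧ FVCond R D


lemma DSteps.snoc {S : Type} {R : RCS S} {D0 D D' : DConfig S} {τ : Trace} {a : Action}
    (h : DSteps R D0 τ D) (h1 : DStep R D a D') : DSteps R D0 (τ ++ [a]) D' := by
  induction h with
  | refl => exact DSteps.step h1 (DSteps.refl _)
  | step h hs ih => exact DSteps.step h (ih h1)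

lemma DReachable.step {S : Type} {R : RCS S} {D D' : DConfig S} {a : Action}
    (h : DReachable R D) (h1 : DStep R D a D') : DReachable R D' := by
  obtain ⟨D0, τ, h0, hs⟩ := h
  exact ⟨D0, τ ++ [a], h0, hs.snoc h1⟩

/-- For a decentralisable system, the centralised configuration simulates the
decentralised one: there is a simulation relation, relating initial
configurations, under which local states and queues coincide and the
centralised global map is a superset of the (disjoint) union of the local
maps; every decentralised reduction is matched by a centralised reduction. -/
theorem centralised_simulates_decentralised {S : Type} (R : RCS S)
    (hdec : Decentralisable R) :
    ∃ Rel : DConfig S → Config S → Prop,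
      (∀ (D : DConfig S) (C : Config S), DInitial R D → Initial R C → Rel D C) ∧
      (∀ (D : DConfig S) (C : Config S), Rel D C →
        D.st = C.st ∧ D.q = C.q ∧
        ∀ (i : Part) (x : Var) (v : Val), D.lm i x = some v → C.m x = some v) ∧
      (∀ (D : DConfig S) (C : Config S) (a : Action) (D' : DConfig S),
        Rel D C → DStep R D a D' →
        ∃ C', Step R C a C' ∧ Rel D' C') := by
  classical
  refine ⟨fun D C => DReachable R D ∧ D.st = C.st ∧ D.q = C.q ∧
      (∀ i x v, D.lm i x = some v → C.m x = some v), ?_, ?_, ?_⟩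
  · rintro D C ⟨hq, hlm, hst⟩ ⟨hq', hm', hst'⟩
    refine ⟨⟨D, [], ⟨hq, hlm, hst⟩, DSteps.refl D⟩, ?_, ?_, ?_⟩
    · funext p; rw [hst p, hst' p]
    · rw [hq, hq']
    · intro i x v h
      rw [hlm i] at h; exact absurd h (by simp [emptyM])
  · rintro D C ⟨_, h1, h2, h3⟩; exact ⟨h1, h2, h3⟩
  · rintro D C a D' ⟨hreach, hst, hq, hlm⟩ hstep
    have hreach' : DReachable R D' := hreach.step hstep
    cases hstep with
    | @snd i j l x c r s0 htr hsat =>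
      -- satisfaction transfers to the centralised map
      have hagree : ∀ y ∈ r.fv, updM (D.lm i) x c y = updM C.m x c y := by
        intro y hy
        have hdomy : updM (D.lm i) x c y ≠ none := hsat.1 hy
        by_cases hyx : y = x
        · subst hyx; simp [updM]
        · simp only [updM, Function.update_apply, if_neg hyx] at hdomy ⊢
          obtain ⟨v, hv⟩ := Option.ne_none_iff_exists'.mp hdomy
          rw [hv, hlm i y v hv]
      have hsatC : Sat (updM C.m x c) r := by
        constructor
        · intro y hy
          have := hagree y hy
          exact fun h => hsat.1 hy (by rw [this, h])
        · exact (r.congr _ _ hagree).mp hsat.2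
      refine ⟨_, Step.snd (C := C) (by rw [← hst]; exact htr) hsatC, hreach', ?_, ?_, ?_⟩
      · simp [hst]
      · simp [hq]
      · intro j0 y v hv
        by_cases hji : j0 = i
        · subst hji
          simp only [Function.update_self] at hv
          have hyx : y ≠ x := by
            intro h; subst h; simp [removeM] at hv
          simp only [removeM, Function.update_apply, if_neg hyx] at hv
          simpa [updM, Function.update_apply, if_neg hyx] using hlm j0 y v hv
        · simp only [Function.update_of_ne hji] at hv
          have hyx : y ≠ x := by
            intro h; subst h
            have hmem : y ∈ MDom ((Function.update D.lm i (removeM (D.lm i) y)) j0) := by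
              show (Function.update D.lm i (removeM (D.lm i) y)) j0 y ≠ none
              simp only [Function.update_of_ne hji, hv]; exact fun h => by cases h
            have hnd := (hdec _ hreach').1.1 y j0 hmem
            have := hnd.1 i j (l, y, c) (by
              show (l, y, c) ∈ pushQ D.q (l, y, c) i j i j
              simp [pushQ])
            exact this rfl
          simp only [updM, Function.update_apply, if_neg hyx]
          exact hlm j0 y v hv
    | @rcv j i l x c r s0 htr hsat hnext =>
      have hagree : ∀ y ∈ r.fv, updM (D.lm i) x c y = updM C.m x c y := by
        intro y hy
        have hdomy : updM (D.lm i) x c y ≠ none := hsat.1 hy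
        by_cases hyx : y = x
        · subst hyx; simp [updM]
        · simp only [updM, Function.update_apply, if_neg hyx] at hdomy ⊢
          obtain ⟨v, hv⟩ := Option.ne_none_iff_exists'.mp hdomy
          rw [hv, hlm i y v hv]
      have hsatC : Sat (updM C.m x c) r := by
        constructor
        · intro y hy
          have := hagree y hy
          exact fun h => hsat.1 hy (by rw [this, h])
        · exact (r.congr _ _ hagree).mp hsat.2
      have hnextC : nextQ C.q j i = some (l, x, c) := by rw [← hq]; exact hnext
      refine ⟨_, Step.rcv (C := C) (by rw [← hst]; exact htr) hsatC hnextC, hreach', ?_, ?_, ?_⟩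
      · simp [hst]
      · simp [hq]
      · intro j0 y v hv
        by_cases hji : j0 = i
        · subst hji
          simp only [Function.update_self] at hv
          by_cases hyx : y = x
          · subst hyx
            simp only [updM, Function.update_self] at hv ⊢
            exact hv
          · simp only [updM, Function.update_apply, if_neg hyx] at hv ⊢
            exact hlm j0 y v hv
        · simp only [Function.update_of_ne hji] at hv
          have hyx : y ≠ x := by
            intro h; subst h
            -- the message (l, y, c) is in the queue of D while y is in D.lm j0
            have hget : (D.q j i)[(0 : Nat)]? = some (l, y, c) := by
              unfold nextQ at hnext
              cases hw : D.q j i with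
              | nil => rw [hw] at hnext; simp at hnext
              | cons m rest => rw [hw] at hnext; simp at hnext; simp [hnext]
            have hnd := ((hdec D hreach).1.2 y j i 0 (l, y, c) hget rfl).1 j0
            exact hnd (by show D.lm j0 y ≠ none; rw [hv]; exact fun h => by cases h)
          simp only [updM, Function.update_apply, if_neg hyx]
          exact hlm j0 y v hv


end RefinedMPST
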